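/- Commutation of sequential composition over disjoint variables: let S1, ..., Sn be statements over pairwise disjoint sets of variables and let π be any permutation of {1, ..., n}. Then for all valuations σ, σ', σ ⊢ S1; ...; Sn ⇓ σ' if and only if σ ⊢ Sπ(1); ...; Sπ(n) ⇓ σ'. -/

import Mathlib

namespace ProgMerge

/-! ## A simple imperative language with arrays and holes -/

/-- Program variables. -/
abbrev Var := String

/-- Values: `none` is the distinguished uninitialized value `⊥`. -/
abbrev Val := Option Int

/-- A valuation maps (variable, index) pairs to values; reads of
uninitialized locations yield `⊥` (i.e. `none`). -/
abbrev Valuation := Var → Int → Val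

/-- Expressions. -/
inductive Expr where
  | const : Int → Expr
  | var : Var → Expr
  | arr : Var → Expr → Expr
  | add : Expr → Expr → Expr

/-- Expression evaluation. -/
def Expr.eval (σ : Valuation) : Expr → Val
  | .const n => some n
  | .var x => σ x 0
  | .arr x e =>
      match e.eval σ with
      | some i => σ x i
      | none => none
  | .add e₁ e₂ =>
      match e₁.eval σ, e₂.eval σ with
      | some a, some b => some (a + b)
      | _, _ => none

/-- Variables mentioned by an expression. -/
def Expr.vars : Expr → Set Var
  | .const _ => ∅
  | .var x => {x}
  | .arr x e => {x} ∪ e.vars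
  | .add e₁ e₂ => e₁.vars ∪ e₂.vars

/-- Boolean conditions. -/
inductive Cond where
  | eq : Expr → Expr → Cond
  | not : Cond → Cond
  | and : Cond → Cond → Cond

/-- Condition evaluation. -/
def Cond.eval (σ : Valuation) : Cond → Bool
  | .eq e₁ e₂ => decide (e₁.eval σ = e₂.eval σ)
  | .not c => !(c.eval σ)
  | .and c₁ c₂ => c₁.eval σ && c₂.eval σ

/-- Variables mentioned by a condition. -/
def Cond.vars : Cond → Set Var
  | .eq e₁ e₂ => e₁.vars ∪ e₂.vars
  | .not c => c.vars
  | .and c₁ c₂ => c₁.vars ∪ c₂.vars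

/-- Statements, possibly containing holes `??` (constructor `hole`).
Hole-free statements are the statements of the base language. -/
inductive Stmt where
  | hole : Stmt
  | skip : Stmt
  | assign : Var → Expr → Stmt
  | arrAssign : Var → Expr → Expr → Stmt
  | seq : Stmt → Stmt → Stmt
  | ifte : Cond → Stmt → Stmt → Stmt
  | whileDo : Cond → Stmt → Stmt

instance : Inhabited Stmt := ⟨.skip⟩

/-- Variables mentioned by a statement (including its conditions and expressions). -/
def Stmt.vars : Stmt → Set Var
  | .hole => ∅
  | .skip => ∅
  | .assign x e => {x} ∪ e.vars
  | .arrAssign x e₁ e₂ => {x} ∪ e₁.vars ∪ e₂.vars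
  | .seq s₁ s₂ => s₁.vars ∪ s₂.vars
  | .ifte c s₁ s₂ => c.vars ∪ s₁.vars ∪ s₂.vars
  | .whileDo c s => c.vars ∪ s.vars

/-- Number of holes in a statement. -/
def Stmt.numHoles : Stmt → ℕ
  | .hole => 1
  | .skip => 0
  | .assign _ _ => 0
  | .arrAssign _ _ _ => 0
  | .seq s₁ s₂ => s₁.numHoles + s₂.numHoles
  | .ifte _ s₁ s₂ => s₁.numHoles + s₂.numHoles
  | .whileDo _ s => s.numHoles

/-- A statement is hole-free if it contains no holes. -/
def Stmt.HoleFree (s : Stmt) : Prop := s.numHoles = 0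

/-- Updating a valuation at a (variable, index) location. -/
def Valuation.update (σ : Valuation) (x : Var) (i : Int) (v : Val) : Valuation :=
  fun y j => if y = x ∧ j = i then v else σ y j

/-- Standard big-step operational semantics `σ ⊢ S ⇓ σ'`.
There is no rule for holes. -/
inductive BigStep : Stmt → Valuation → Valuation → Prop where
  | skip {σ} : BigStep .skip σ σ
  | assign {x e σ} : BigStep (.assign x e) σ (σ.update x 0 (e.eval σ))
  | arrAssign {x e₁ e₂ σ i} : e₁.eval σ = some i →
      BigStep (.arrAssign x e₁ e₂) σ (σ.update x i (e₂.eval σ))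
  | seq {s₁ s₂ σ σ₁ σ₂} : BigStep s₁ σ σ₁ → BigStep s₂ σ₁ σ₂ →
      BigStep (.seq s₁ s₂) σ σ₂
  | ifteTrue {c s₁ s₂ σ σ'} : c.eval σ = true → BigStep s₁ σ σ' →
      BigStep (.ifte c s₁ s₂) σ σ'
  | ifteFalse {c s₁ s₂ σ σ'} : c.eval σ = false → BigStep s₂ σ σ' →
      BigStep (.ifte c s₁ s₂) σ σ'
  | whileFalse {c s σ} : c.eval σ = false → BigStep (.whileDo c s) σ σ
  | whileTrue {c s σ σ₁ σ₂} : c.eval σ = true → BigStep s σ σ₁ →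
      BigStep (.whileDo c s) σ₁ σ₂ → BigStep (.whileDo c s) σ σ₂

/-- `Apply`: fill the holes of a statement with the successive entries of an
edit, in depth-first left-to-right order, returning the filled statement
together with the unconsumed remainder of the edit. -/
def Stmt.applyAux : Stmt → List Stmt → Stmt × List Stmt
  | .hole, s :: Δ => (s, Δ)
  | .hole, [] => (.hole, [])
  | .skip, Δ => (.skip, Δ)
  | .assign x e, Δ => (.assign x e, Δ)
  | .arrAssign x e₁ e₂, Δ => (.arrAssign x e₁ e₂, Δ)
  | .seq s₁ s₂, Δ =>
      match s₁.applyAux Δ with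
      | (t₁, Δ₁) =>
        match s₂.applyAux Δ₁ with
        | (t₂, Δ₂) => (.seq t₁ t₂, Δ₂)
  | .ifte c s₁ s₂, Δ =>
      match s₁.applyAux Δ with
      | (t₁, Δ₁) =>
        match s₂.applyAux Δ₁ with
        | (t₂, Δ₂) => (.ifte c t₁ t₂, Δ₂)
  | .whileDo c s, Δ =>
      match s.applyAux Δ with
      | (t, Δ') => (.whileDo c t, Δ')

/-- Edit application `Ŝ[Δ]`. -/
def Stmt.applyEdit (s : Stmt) (Δ : List Stmt) : Stmt := (s.applyAux Δ).1

/-- Total number of holes occurring in the entries of a (generalized) edit. -/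
def editNumHoles (Δ : List Stmt) : ℕ := (Δ.map Stmt.numHoles).sum

/-- Sequential composition `S₁; ...; Sₙ` of a list of statements. -/
def seqAll (P : List Stmt) : Stmt := P.foldr Stmt.seq .skip

/-!
A run of a statement reads and writes only the statement's own variables. So when `s` and `t`
have disjoint variables, a run of `t` after `s` can be replayed from the initial state, and `s`
run afterwards reaches the same final state; adjacent statements of the sequence can thus be
swapped, and every permutation is a product of adjacent swaps.
-/

open Set

theorem Expr.eval_congr {σ τ : Valuation} : ∀ {e : Expr}, EqOn σ τ e.vars → e.eval σ = e.eval τ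
  | .const _, _ => rfl
  | .var _, h => congrFun (h rfl) 0
  | .arr _ _, h => by
      simp only [Expr.eval, Expr.eval_congr (h.mono subset_union_right), h (Or.inl rfl)]
  | .add _ _, h => by
      simp only [Expr.eval, Expr.eval_congr (h.mono subset_union_left),
        Expr.eval_congr (h.mono subset_union_right)]

theorem Cond.eval_congr {σ τ : Valuation} : ∀ {c : Cond}, EqOn σ τ c.vars → c.eval σ = c.eval τ
  | .eq _ _, h => by
      simp only [Cond.eval, Expr.eval_congr (h.mono subset_union_left),
        Expr.eval_congr (h.mono subset_union_right)]
  | .not c, h => by simp only [Cond.eval, Cond.eval_congr (c := c) h]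
  | .and _ _, h => by
      simp only [Cond.eval, Cond.eval_congr (h.mono subset_union_left),
        Cond.eval_congr (h.mono subset_union_right)]

theorem Valuation.eqOn_update {σ τ : Valuation} {V : Set Var} (h : EqOn σ τ V) (x : Var) (i : Int)
    (v : Val) : EqOn (σ.update x i v) (τ.update x i v) V := fun y hy => funext fun j => by
  simp only [Valuation.update]
  split_ifs
  · rfl
  · exact congrFun (h hy) j

theorem Valuation.update_eqOn_compl (σ : Valuation) (x : Var) (i : Int) (v : Val) :
    EqOn (σ.update x i v) σ {x}ᶜ := fun y hy => funext fun j => by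
  simp [Valuation.update, Set.mem_compl_singleton_iff.mp hy]

theorem BigStep.eqOn_compl_vars {s : Stmt} {σ σ' : Valuation} (h : BigStep s σ σ') :
    EqOn σ' σ s.varsᶜ := by
  induction h with
  | skip | whileFalse _ => exact eqOn_refl _ _
  | assign | arrAssign _ =>
      exact (Valuation.update_eqOn_compl _ _ _ _).mono (compl_subset_compl.2 (by simp [Stmt.vars]))
  | seq _ _ ih₁ ih₂ =>
      exact (ih₂.mono (compl_subset_compl.2 subset_union_right)).trans
        (ih₁.mono (compl_subset_compl.2 subset_union_left))
  | ifteTrue _ _ ih =>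
      exact ih.mono (compl_subset_compl.2 (subset_union_right.trans subset_union_left))
  | ifteFalse _ _ ih => exact ih.mono (compl_subset_compl.2 subset_union_right)
  | whileTrue _ _ _ ih₁ ih₂ =>
      exact ih₂.trans (ih₁.mono (compl_subset_compl.2 subset_union_right))

theorem BigStep.exists_eqOn {s : Stmt} {σ σ' τ : Valuation} {V : Set Var} (h : BigStep s σ σ')
    (hV : s.vars ⊆ V) (hστ : EqOn σ τ V) : ∃ τ', BigStep s τ τ' ∧ EqOn σ' τ' V := by
  induction h generalizing τ with
  | skip => exact ⟨τ, .skip, hστ⟩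
  | assign =>
      simp only [Stmt.vars, union_subset_iff] at hV
      rw [Expr.eval_congr (hστ.mono hV.2)]
      exact ⟨_, .assign, Valuation.eqOn_update hστ _ _ _⟩
  | arrAssign hi =>
      simp only [Stmt.vars, union_subset_iff] at hV
      rw [Expr.eval_congr (hστ.mono hV.1.2)] at hi
      rw [Expr.eval_congr (hστ.mono hV.2)]
      exact ⟨_, .arrAssign hi, Valuation.eqOn_update hστ _ _ _⟩
  | seq _ _ ih₁ ih₂ =>
      simp only [Stmt.vars, union_subset_iff] at hV
      obtain ⟨τ₁, h₁, hστ₁⟩ := ih₁ hV.1 hστ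
      obtain ⟨τ₂, h₂, hστ₂⟩ := ih₂ hV.2 hστ₁
      exact ⟨τ₂, .seq h₁ h₂, hστ₂⟩
  | ifteTrue hc _ ih =>
      simp only [Stmt.vars, union_subset_iff] at hV
      rw [Cond.eval_congr (hστ.mono hV.1.1)] at hc
      obtain ⟨τ', h, hστ'⟩ := ih hV.1.2 hστ
      exact ⟨τ', .ifteTrue hc h, hστ'⟩
  | ifteFalse hc _ ih =>
      simp only [Stmt.vars, union_subset_iff] at hV
      rw [Cond.eval_congr (hστ.mono hV.1.1)] at hc
      obtain ⟨τ', h, hστ'⟩ := ih hV.2 hστ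
      exact ⟨τ', .ifteFalse hc h, hστ'⟩
  | whileFalse hc =>
      rw [Cond.eval_congr (hστ.mono (subset_union_left.trans hV))] at hc
      exact ⟨τ, .whileFalse hc, hστ⟩
  | whileTrue hc _ _ ih₁ ih₂ =>
      rw [Cond.eval_congr (hστ.mono (subset_union_left.trans hV))] at hc
      obtain ⟨τ₁, h₁, hστ₁⟩ := ih₁ (subset_union_right.trans hV) hστ
      obtain ⟨τ₂, h₂, hστ₂⟩ := ih₂ hV hστ₁
      exact ⟨τ₂, .whileTrue hc h₁ h₂, hστ₂⟩

theorem BigStep.comm_of_disjoint {s t : Stmt} (hst : Disjoint s.vars t.vars)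
    {σ σ₁ σ₂ : Valuation} (hs : BigStep s σ σ₁) (ht : BigStep t σ₁ σ₂) :
    ∃ τ, BigStep t σ τ ∧ BigStep s τ σ₂ := by
  obtain ⟨τ, ht', hσ₂τ⟩ := ht.exists_eqOn hst.subset_compl_left hs.eqOn_compl_vars
  obtain ⟨σ₂', hs', hσ₁σ₂'⟩ :=
    hs.exists_eqOn hst.subset_compl_right ht'.eqOn_compl_vars.symm
  -- `σ₂'` agrees with `σ₂` off `t.vars` through `σ₁`, and on `t.vars` through `τ`.
  have hσ₂ : σ₂ = σ₂' := funext fun y => by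
    by_cases hy : y ∈ t.vars
    · exact (hσ₂τ (hst.subset_compl_left hy)).trans
        (hs'.eqOn_compl_vars (hst.subset_compl_left hy)).symm
    · exact (ht.eqOn_compl_vars hy).trans (hσ₁σ₂' hy)
  exact ⟨τ, ht', hσ₂ ▸ hs'⟩

theorem bigStep_seq_iff {s t : Stmt} {σ σ' : Valuation} :
    BigStep (.seq s t) σ σ' ↔ ∃ σ₁, BigStep s σ σ₁ ∧ BigStep t σ₁ σ' :=
  ⟨fun | .seq h₁ h₂ => ⟨_, h₁, h₂⟩, fun ⟨_, h₁, h₂⟩ => .seq h₁ h₂⟩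

theorem BigStep.seq_seq_swap {a b t : Stmt} (hab : Disjoint a.vars b.vars) {σ σ' : Valuation}
    (h : BigStep (.seq a (.seq b t)) σ σ') : BigStep (.seq b (.seq a t)) σ σ' := by
  obtain ⟨σ₁, ha, σ₂, hb, ht⟩ := by simpa only [bigStep_seq_iff] using h
  obtain ⟨τ, hb', ha'⟩ := ha.comm_of_disjoint hab hb
  exact .seq hb' (.seq ha' ht)

theorem bigStep_seqAll_iff_of_perm {l₁ l₂ : List Stmt} (hp : l₁.Perm l₂)
    (hl₁ : l₁.Pairwise fun a b => Disjoint a.vars b.vars) (σ σ' : Valuation) :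
    BigStep (seqAll l₁) σ σ' ↔ BigStep (seqAll l₂) σ σ' := by
  induction hp generalizing σ σ' with
  | nil => rfl
  | cons a _ ih =>
      simp only [seqAll, List.foldr_cons, bigStep_seq_iff] at ih ⊢
      simp only [ih hl₁.of_cons]
  | swap a b l =>
      have hba : Disjoint b.vars a.vars := List.rel_of_pairwise_cons hl₁ List.mem_cons_self
      exact ⟨BigStep.seq_seq_swap hba, BigStep.seq_seq_swap hba.symm⟩
  | trans hp₁₂ _ ih₁₂ ih₂₃ =>
      exact (ih₁₂ hl₁ σ σ').trans (ih₂₃ (hl₁.perm hp₁₂ fun h => h.symm) σ σ')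

theorem seq_commute_of_disjoint_general
    (n : ℕ) (S : Fin n → Stmt)
    (hdisj : ∀ i j, i ≠ j → Disjoint (S i).vars (S j).vars)
    (π : Equiv.Perm (Fin n)) :
    ∀ σ σ' : Valuation,
      BigStep (seqAll (List.ofFn S)) σ σ' ↔
        BigStep (seqAll (List.ofFn fun i => S (π i))) σ σ' :=
  bigStep_seqAll_iff_of_perm (Equiv.Perm.ofFn_comp_perm π S).symm
    (List.pairwise_ofFn.mpr fun i j hij => hdisj i j hij.ne)

/-- **Commutation of sequential composition over disjoint variables**: if
`S₁, ..., Sₙ` are statements over pairwise disjoint sets of variables and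
`π` is any permutation of `{1, ..., n}`, then `S₁; ...; Sₙ` and
`S_{π(1)}; ...; S_{π(n)}` have the same big-step behavior. -/
theorem seq_commute_of_disjoint
    (n : ℕ) (S : Fin n → Stmt)
    (hholeFree : ∀ i, (S i).HoleFree)
    (hdisj : ∀ i j, i ≠ j → Disjoint (S i).vars (S j).vars)
    (π : Equiv.Perm (Fin n)) :
    ∀ σ σ' : Valuation,
      BigStep (seqAll (List.ofFn S)) σ σ' ↔
        BigStep (seqAll (List.ofFn fun i => S (π i))) σ σ' :=
  seq_commute_of_disjoint_general n S hdisj π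

end ProgMerge
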